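/- arXiv:1305.5089 — 4 statements merged into one kernel-verified Lean document; each statement's English description precedes it below -/
import Mathlib

section
/- Let L be a 3-dimensional ω-Lie algebra over a field k of characteristic zero whose commutator subalgebra L' = [L,L] is 1-dimensional. Then ω is identically zero, i.e., L is a trivial ω-Lie algebra (a Lie algebra). -/
/-!
All brackets lie on a line `k ∙ e`, and anticommutativity in characteristic zero gives
`[e,e] = 0`, so the Jacobiator of `x, y, e` vanishes. The ω-Jacobi identity at `(a, b, e)`
then reads `ω(a,b) e + ω(b,e) a + ω(e,a) b = 0`; if `ω(a,b) ≠ 0` this puts `e`, hence every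
Jacobiator, in `span {a, b}`, and the ω-Jacobi identity at `(a, b, z)` then puts every `z`
there too, which is impossible when `dim L > 2`.
-/

lemma finrank_span_pair_le_two {k L : Type*} [Field k] [AddCommGroup L] [Module k L]
    (a b : L) : Module.finrank k (Submodule.span k ({a, b} : Set L)) ≤ 2 := by
  classical
  have h := finrank_span_finset_le_card (R := k) ({a, b} : Finset L)
  rw [Finset.coe_pair] at h
  exact h.trans Finset.card_le_two

namespace OmegaLie

variable {k L : Type*} [Field k] [AddCommGroup L] [Module k L]
  {bracket : L →ₗ[k] L →ₗ[k] L}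

variable (bracket) in
def jacobiator (a b c : L) : L :=
  bracket (bracket a b) c + bracket (bracket b c) a + bracket (bracket c a) b

lemma exists_forall_bracket_eq_smul_of_finrank_span_eq_one
    (hD : Module.finrank k
      ↥(Submodule.span k (Set.range fun p : L × L => bracket p.1 p.2)) = 1) :
    ∃ e : L, ∀ a b : L, ∃ c : k, bracket a b = c • e := by
  obtain ⟨e, -, he⟩ := finrank_eq_one_iff'.mp hD
  refine ⟨e, fun a b => ?_⟩
  obtain ⟨c, hc⟩ := he ⟨bracket a b, Submodule.subset_span ⟨(a, b), rfl⟩⟩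
  exact ⟨c, congrArg Subtype.val hc.symm⟩

lemma bracket_self_eq_zero [CharZero k] (hanti : ∀ a b : L, bracket a b = - bracket b a)
    (a : L) : bracket a a = 0 :=
  have := IsAddTorsionFree.of_isTorsionFree k L
  self_eq_neg.mp (hanti a a)

section Generator

variable {e : L} (hbr : ∀ a b : L, ∃ c : k, bracket a b = c • e)
include hbr

lemma jacobiator_mem_span_singleton (a b c : L) : jacobiator bracket a b c ∈ k ∙ e := by
  have hmem : ∀ x y : L, bracket x y ∈ k ∙ e := fun x y => by
    obtain ⟨c, hc⟩ := hbr x y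
    exact hc ▸ Submodule.smul_mem _ c (Submodule.mem_span_singleton_self e)
  exact add_mem (add_mem (hmem _ _) (hmem _ _)) (hmem _ _)

/-- `[[x,y],e]` vanishes because `[e,e] = 0`, and `[[y,e],x] = βγ e = -[[e,x],y]`
where `[y,e] = β e` and `[e,x] = γ e`. -/
lemma jacobiator_generator_eq_zero [CharZero k]
    (hanti : ∀ a b : L, bracket a b = - bracket b a) (x y : L) :
    jacobiator bracket x y e = 0 := by
  obtain ⟨α, hα⟩ := hbr x y
  obtain ⟨β, hβ⟩ := hbr y e
  obtain ⟨γ, hγ⟩ := hbr e x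
  have hey : bracket e y = -(β • e) := by rw [hanti e y, hβ]
  simp only [jacobiator, hα, hβ, hγ, map_smul, LinearMap.smul_apply,
    bracket_self_eq_zero hanti, hey, smul_zero, smul_neg, smul_smul, mul_comm γ β]
  abel

lemma mem_span_pair_of_omega_ne_zero [CharZero k] {ω : L →ₗ[k] L →ₗ[k] k}
    (hanti : ∀ a b : L, bracket a b = - bracket b a)
    (hjac : ∀ a b c : L, jacobiator bracket a b c = ω a b • c + ω b c • a + ω c a • b)
    {a b : L} (hab : ω a b ≠ 0) : e ∈ Submodule.span k {a, b} := by
  have h := (hjac a b e).symm.trans (jacobiator_generator_eq_zero hbr hanti a b)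
  rw [← Submodule.smul_mem_iff _ hab, Submodule.mem_span_pair]
  exact ⟨-ω b e, -ω e a, by linear_combination (norm := module) -h⟩

lemma span_pair_eq_top_of_omega_ne_zero [CharZero k] {ω : L →ₗ[k] L →ₗ[k] k}
    (hanti : ∀ a b : L, bracket a b = - bracket b a)
    (hjac : ∀ a b c : L, jacobiator bracket a b c = ω a b • c + ω b c • a + ω c a • b)
    {a b : L} (hab : ω a b ≠ 0) : Submodule.span k {a, b} = ⊤ := by
  refine Submodule.eq_top_iff'.mpr fun z => ?_
  have he : k ∙ e ≤ Submodule.span k {a, b} := (Submodule.span_singleton_le_iff_mem _ _).mpr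
    (mem_span_pair_of_omega_ne_zero hbr hanti hjac hab)
  have ha : a ∈ Submodule.span k {a, b} := Submodule.subset_span (Set.mem_insert a {b})
  have hb : b ∈ Submodule.span k {a, b} := Submodule.subset_span (Set.mem_insert_of_mem a rfl)
  have hz : ω a b • z = jacobiator bracket a b z - ω b z • a - ω z a • b := by
    rw [hjac]; abel
  rw [← Submodule.smul_mem_iff _ hab, hz]
  exact sub_mem (sub_mem (he (jacobiator_mem_span_singleton hbr a b z))
    (Submodule.smul_mem _ _ ha)) (Submodule.smul_mem _ _ hb)

lemma omega_eq_zero_of_two_lt_finrank [CharZero k] {ω : L →ₗ[k] L →ₗ[k] k}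
    (hanti : ∀ a b : L, bracket a b = - bracket b a)
    (hjac : ∀ a b c : L, jacobiator bracket a b c = ω a b • c + ω b c • a + ω c a • b)
    (hL : 2 < Module.finrank k L) (a b : L) : ω a b = 0 := by
  by_contra hab
  have hle := finrank_span_pair_le_two (k := k) a b
  rw [span_pair_eq_top_of_omega_ne_zero hbr hanti hjac hab, finrank_top] at hle
  omega

end Generator

end OmegaLie

theorem omega_lie_rank_one_trivial_general
    {k L : Type*} [Field k] [CharZero k] [AddCommGroup L] [Module k L]
    (bracket : L →ₗ[k] L →ₗ[k] L) (ω : L →ₗ[k] L →ₗ[k] k)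
    (hanti : ∀ a b : L, bracket a b = - bracket b a)
    (hjac : ∀ a b c : L,
      bracket (bracket a b) c + bracket (bracket b c) a + bracket (bracket c a) b
        = ω a b • c + ω b c • a + ω c a • b)
    (hdim : Module.finrank k L = 3)
    (hderived : Module.finrank k
      ↥(Submodule.span k (Set.range fun p : L × L => bracket p.1 p.2)) = 1) :
    ∀ a b : L, ω a b = 0 := by
  obtain ⟨e, hbr⟩ := OmegaLie.exists_forall_bracket_eq_smul_of_finrank_span_eq_one hderived
  exact OmegaLie.omega_eq_zero_of_two_lt_finrank hbr hanti hjac (by omega)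

/-- A 3-dimensional ω-Lie algebra over a field of characteristic zero whose commutator
subalgebra `L' = [L,L]` (the span of all brackets) is 1-dimensional has `ω ≡ 0`,
i.e. it is a trivial ω-Lie algebra (a Lie algebra). -/
theorem omega_lie_rank_one_trivial
    {k L : Type*} [Field k] [CharZero k] [AddCommGroup L] [Module k L]
    [FiniteDimensional k L]
    (bracket : L →ₗ[k] L →ₗ[k] L) (ω : L →ₗ[k] L →ₗ[k] k)
    (hanti : ∀ a b : L, bracket a b = - bracket b a)
    (hskew : ∀ a b : L, ω a b = - ω b a)
    (hjac : ∀ a b c : L,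
      bracket (bracket a b) c + bracket (bracket b c) a + bracket (bracket c a) b
        = ω a b • c + ω b c • a + ω c a • b)
    (hdim : Module.finrank k L = 3)
    (hderived : Module.finrank k
      ↥(Submodule.span k (Set.range fun p : L × L => bracket p.1 p.2)) = 1) :
    ∀ a b : L, ω a b = 0 :=
  omega_lie_rank_one_trivial_general bracket ω hanti hjac hdim hderived
end

section
/- For every α ∈ ℂ, on the 3-dimensional complex vector space with basis {x,y,z}, the anticommutative bilinear bracket determined by [x,y] = x, [x,z] = x+y, [y,z] = z+αx, together with the skew-symmetric bilinear form ω determined by ω(x,y) = 0, ω(x,z) = 0, ω(y,z) = −1, satisfies the ω-Jacobi identity; this structure A_α is a nontrivial (non-Lie) ω-Lie algebra. -/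
/-- The bracket of `A_α` on `ℂ³`: the bilinear extension of `[x,y] = x`,
`[x,z] = x + y`, `[y,z] = z + α x` on the standard basis `x = e₀, y = e₁, z = e₂`. -/
def brA (α : ℂ) (u v : Fin 3 → ℂ) : Fin 3 → ℂ :=
  ![(u 0 * v 1 - u 1 * v 0) + (u 0 * v 2 - u 2 * v 0) + α * (u 1 * v 2 - u 2 * v 1),
    u 0 * v 2 - u 2 * v 0, u 1 * v 2 - u 2 * v 1]

/-- The form of `A_α`: the bilinear extension of `ω(x,y) = ω(x,z) = 0`, `ω(y,z) = -1`. -/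
def omA (u v : Fin 3 → ℂ) : ℂ := -(u 1 * v 2 - u 2 * v 1)

namespace brA

variable (α a b : ℂ) (u v w : Fin 3 → ℂ)

theorem add_smul_left : brA α (a • u + b • v) w = a • brA α u w + b • brA α v w := by
  ext i
  fin_cases i <;>
    simp only [brA, Pi.add_apply, Pi.smul_apply, smul_eq_mul,
      Fin.isValue, Fin.zero_eta, Fin.mk_one, Fin.reduceFinMk, Matrix.cons_val] <;> ring

theorem add_smul_right : brA α w (a • u + b • v) = a • brA α w u + b • brA α w v := by
  ext i
  fin_cases i <;>
    simp only [brA, Pi.add_apply, Pi.smul_apply, smul_eq_mul,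
      Fin.isValue, Fin.zero_eta, Fin.mk_one, Fin.reduceFinMk, Matrix.cons_val] <;> ring

theorem anticomm : brA α u v = -brA α v u := by
  ext i
  fin_cases i <;>
    simp only [brA, Pi.neg_apply, Fin.isValue, Fin.zero_eta, Fin.mk_one, Fin.reduceFinMk,
      Matrix.cons_val] <;> ring

theorem e₀_e₁ : brA α ![1, 0, 0] ![0, 1, 0] = ![1, 0, 0] := by
  ext i; fin_cases i <;> simp [brA]

theorem e₀_e₂ : brA α ![1, 0, 0] ![0, 0, 1] = ![1, 0, 0] + ![0, 1, 0] := by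
  ext i; fin_cases i <;> simp [brA]

theorem e₁_e₂ : brA α ![0, 1, 0] ![0, 0, 1] = ![0, 0, 1] + α • ![1, 0, 0] := by
  ext i; fin_cases i <;> simp [brA]

theorem omega_jacobi :
    brA α (brA α u v) w + brA α (brA α v w) u + brA α (brA α w u) v
      = omA u v • w + omA v w • u + omA w u • v := by
  ext i
  fin_cases i <;>
    simp only [brA, omA, Pi.add_apply, Pi.smul_apply, smul_eq_mul,
      Fin.isValue, Fin.zero_eta, Fin.mk_one, Fin.reduceFinMk, Matrix.cons_val] <;> ring

end brA

namespace omA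

variable (a b : ℂ) (u v w : Fin 3 → ℂ)

theorem add_smul_left : omA (a • u + b • v) w = a * omA u w + b * omA v w := by
  simp only [omA, Pi.add_apply, Pi.smul_apply, smul_eq_mul]; ring

theorem add_smul_right : omA w (a • u + b • v) = a * omA w u + b * omA w v := by
  simp only [omA, Pi.add_apply, Pi.smul_apply, smul_eq_mul]; ring

theorem anticomm : omA u v = -omA v u := by
  unfold omA; ring

theorem e₀_e₁ : omA ![1, 0, 0] ![0, 1, 0] = 0 := by simp [omA]

theorem e₀_e₂ : omA ![1, 0, 0] ![0, 0, 1] = 0 := by simp [omA]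

theorem e₁_e₂ : omA ![0, 1, 0] ![0, 0, 1] = -1 := by simp [omA]

theorem exists_ne_zero : ∃ u v : Fin 3 → ℂ, omA u v ≠ 0 :=
  ⟨_, _, by rw [e₁_e₂]; exact neg_ne_zero.mpr one_ne_zero⟩

end omA

/-- For every `α ∈ ℂ`, on `ℂ³` with basis `x = e₀, y = e₁, z = e₂`, the anticommutative
bilinear bracket determined by `[x,y] = x`, `[x,z] = x + y`, `[y,z] = z + α x` and the
skew-symmetric bilinear form determined by `ω(x,y) = ω(x,z) = 0`, `ω(y,z) = -1`
satisfy the ω-Jacobi identity, and `ω` is not identically zero: `A_α` is a nontrivial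
(non-Lie) ω-Lie algebra. -/
theorem A_alpha_is_nontrivial_omega_lie (α : ℂ) :
    (∀ (a b : ℂ) (u v w : Fin 3 → ℂ),
        brA α (a • u + b • v) w = a • brA α u w + b • brA α v w) ∧
    (∀ (a b : ℂ) (u v w : Fin 3 → ℂ),
        brA α w (a • u + b • v) = a • brA α w u + b • brA α w v) ∧
    (∀ (a b : ℂ) (u v w : Fin 3 → ℂ),
        omA (a • u + b • v) w = a * omA u w + b * omA v w) ∧
    (∀ (a b : ℂ) (u v w : Fin 3 → ℂ),
        omA w (a • u + b • v) = a * omA w u + b * omA w v) ∧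
    brA α ![1,0,0] ![0,1,0] = ![1,0,0] ∧
    brA α ![1,0,0] ![0,0,1] = ![1,0,0] + ![0,1,0] ∧
    brA α ![0,1,0] ![0,0,1] = ![0,0,1] + α • ![1,0,0] ∧
    omA ![1,0,0] ![0,1,0] = 0 ∧
    omA ![1,0,0] ![0,0,1] = 0 ∧
    omA ![0,1,0] ![0,0,1] = -1 ∧
    (∀ u v : Fin 3 → ℂ, brA α u v = - brA α v u) ∧
    (∀ u v : Fin 3 → ℂ, omA u v = - omA v u) ∧
    (∀ u v w : Fin 3 → ℂ,
        brA α (brA α u v) w + brA α (brA α v w) u + brA α (brA α w u) v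
          = omA u v • w + omA v w • u + omA w u • v) ∧
    ¬ (∀ u v : Fin 3 → ℂ, omA u v = 0) :=
  ⟨brA.add_smul_left α, brA.add_smul_right α, omA.add_smul_left, omA.add_smul_right,
    brA.e₀_e₁ α, brA.e₀_e₂ α, brA.e₁_e₂ α, omA.e₀_e₁, omA.e₀_e₂, omA.e₁_e₂,
    brA.anticomm α, omA.anticomm, brA.omega_jacobi α,
    fun h ↦ let ⟨u, v, huv⟩ := omA.exists_ne_zero; huv (h u v)⟩
end

section
/- Let L be a 3-dimensional complex ω-Lie algebra with [L,L] = L. Then for every nonzero x ∈ L, the adjoint map ad_x : L → L, u ↦ [x,u], has rank 2; equivalently, the kernel of ad_x equals the line ℂ·x. -/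
/-!
If `[x, y] = 0` for some `y` independent of `x`, complete `x, y` to a basis `x, y, z`. As the
bracket is alternating, every bracket is then a combination of `[x, z]` and `[y, z]`, so `[L, L]`
has dimension at most 2 and cannot be all of `L`. Hence `ker ad_x = ℂ x`, and rank–nullity
gives rank 2.
-/

open Module Submodule

section

variable {K V : Type*} [Field K] [AddCommGroup V] [Module K V]

theorem LinearIndependent.exists_span_insert_eq_top_of_finrank_eq_three {x y : V}
    (hxy : LinearIndependent K ![x, y]) (hdim : finrank K V = 3) :
    ∃ z, span K {x, y, z} = ⊤ := by
  have : FiniteDimensional K V := Module.finite_of_finrank_eq_succ hdim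
  have hpair : finrank K (span K {x, y}) = 2 := by
    have := finrank_span_eq_card hxy
    rwa [Matrix.range_cons_cons_empty, Fintype.card_fin] at this
  have hne : span K {x, y} ≠ ⊤ := fun h => by
    rw [h, finrank_top, hdim] at hpair
    omega
  obtain ⟨z, -, hz⟩ := SetLike.exists_of_lt (lt_top_iff_ne_top.2 hne)
  refine ⟨z, eq_top_of_finrank_eq (le_antisymm (finrank_le _) ?_)⟩
  have hlt : span K {x, y} < span K {x, y, z} :=
    SetLike.lt_iff_le_and_exists.2 ⟨span_mono (by simp [Set.insert_subset_iff]),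
      z, subset_span (by simp), hz⟩
  have := finrank_lt_finrank_of_lt hlt
  omega

end

namespace LinearMap.IsAlt

variable {K V : Type*} [Field K] [AddCommGroup V] [Module K V]

theorem finrank_span_range_le_two {P : Type*} [AddCommGroup P] [Module K P]
    {B : V →ₗ[K] V →ₗ[K] P} (hB : B.IsAlt) (hdim : finrank K V = 3) {x y : V}
    (hxy : LinearIndependent K ![x, y]) (h : B x y = 0) :
    finrank K (span K (Set.range fun p : V × V => B p.1 p.2)) ≤ 2 := by
  obtain ⟨z, hz⟩ := hxy.exists_span_insert_eq_top_of_finrank_eq_three hdim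
  set T := span K (Set.range ![B x z, B y z])
  have : Module.Finite K T := Module.Finite.span_of_finite K (Set.finite_range _)
  have hxz : B x z ∈ T := subset_span ⟨0, rfl⟩
  have hyz : B y z ∈ T := subset_span ⟨1, rfl⟩
  have hyx : B y x = 0 := by rw [← hB.neg, h, neg_zero]
  have hzx : B z x ∈ T := by rw [← hB.neg]; exact neg_mem hxz
  have hzy : B z y ∈ T := by rw [← hB.neg]; exact neg_mem hyz
  have hgen : ∀ a ∈ ({x, y, z} : Set V), ∀ b ∈ ({x, y, z} : Set V), B a b ∈ T := by
    simp [hB.self_eq_zero, h, hyx, hxz, hyz, hzx, hzy]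
  have hall : span K (Set.range fun p : V × V => B p.1 p.2) ≤ T := by
    refine span_le.2 (Set.range_subset_iff.2 fun p => ?_)
    have hmem : B p.1 p.2 ∈ map₂ B ⊤ ⊤ := apply_mem_map₂ B trivial trivial
    rw [← hz, map₂_span_span] at hmem
    exact span_le.2 (Set.image2_subset_iff.2 hgen) hmem
  calc finrank K (span K (Set.range fun p : V × V => B p.1 p.2))
      ≤ finrank K T := finrank_mono hall
    _ ≤ 2 := finrank_range_le_card _

variable {B : V →ₗ[K] V →ₗ[K] V}

theorem ker_eq_span_singleton (hB : B.IsAlt) (hdim : finrank K V = 3)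
    (hperfect : span K (Set.range fun p : V × V => B p.1 p.2) = ⊤) {x : V} (hx : x ≠ 0) :
    ker (B x) = K ∙ x := by
  refine le_antisymm (fun y hy => ?_) ((span_singleton_le_iff_mem _ _).2 (hB.self_eq_zero x))
  by_contra hyx
  have hxy : LinearIndependent K ![x, y] :=
    (LinearIndependent.pair_iff' hx).2 fun a ha => hyx (mem_span_singleton.2 ⟨a, ha⟩)
  have := hB.finrank_span_range_le_two hdim hxy hy
  rw [hperfect, finrank_top, hdim] at this
  omega

theorem finrank_range_eq_two (hB : B.IsAlt) (hdim : finrank K V = 3)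
    (hperfect : span K (Set.range fun p : V × V => B p.1 p.2) = ⊤) {x : V} (hx : x ≠ 0) :
    finrank K (range (B x)) = 2 := by
  have : FiniteDimensional K V := Module.finite_of_finrank_eq_succ hdim
  have := (B x).finrank_range_add_finrank_ker
  rw [hB.ker_eq_span_singleton hdim hperfect hx, finrank_span_singleton hx, hdim] at this
  omega

end LinearMap.IsAlt

theorem omega_lie_perfect_ad_rank_two_general
    {L : Type*} [AddCommGroup L] [Module ℂ L]
    (bracket : L →ₗ[ℂ] L →ₗ[ℂ] L)
    (hanti : ∀ a b : L, bracket a b = - bracket b a)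
    (hdim : Module.finrank ℂ L = 3)
    (hderived : Submodule.span ℂ (Set.range fun p : L × L => bracket p.1 p.2) = ⊤) :
    ∀ x : L, x ≠ 0 →
      Module.finrank ℂ ↥(LinearMap.range (bracket x)) = 2 ∧
      LinearMap.ker (bracket x) = Submodule.span ℂ {x} := by
  have : IsAddTorsionFree L := .of_isTorsionFree ℂ L
  have hB : bracket.IsAlt := fun a => self_eq_neg.1 (hanti a a)
  exact fun x hx => ⟨hB.finrank_range_eq_two hdim hderived hx,
    hB.ker_eq_span_singleton hdim hderived hx⟩

/-- Let `L` be a 3-dimensional complex ω-Lie algebra with `[L,L] = L`. Then for every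
nonzero `x ∈ L`, the adjoint map `ad_x : u ↦ [x,u]` has rank 2; equivalently, its
kernel is the line `ℂ • x`. -/
theorem omega_lie_perfect_ad_rank_two
    {L : Type*} [AddCommGroup L] [Module ℂ L] [FiniteDimensional ℂ L]
    (bracket : L →ₗ[ℂ] L →ₗ[ℂ] L) (ω : L →ₗ[ℂ] L →ₗ[ℂ] ℂ)
    (hanti : ∀ a b : L, bracket a b = - bracket b a)
    (hskew : ∀ a b : L, ω a b = - ω b a)
    (hjac : ∀ a b c : L,
      bracket (bracket a b) c + bracket (bracket b c) a + bracket (bracket c a) b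
        = ω a b • c + ω b c • a + ω c a • b)
    (hdim : Module.finrank ℂ L = 3)
    (hderived : Submodule.span ℂ (Set.range fun p : L × L => bracket p.1 p.2) = ⊤) :
    ∀ x : L, x ≠ 0 →
      Module.finrank ℂ ↥(LinearMap.range (bracket x)) = 2 ∧
      LinearMap.ker (bracket x) = Submodule.span ℂ {x} :=
  omega_lie_perfect_ad_rank_two_general bracket hanti hdim hderived
end

section
/- There is no 3-dimensional complex ω-Lie algebra L with a basis {x,y,z} such that ω(x,v) = 0 for all v ∈ L, [x,y] = x, and [x,z] = z. -/
/-!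
Apply the coordinate functional `f = b.coord 2` (dual to `z`) to the ω-Jacobi identity for
`(x, y, z)`. On the basis, `ad x` sends `x ↦ 0`, `y ↦ x`, `z ↦ z`, so `f ∘ ad x = f`; hence the
contributions of `[[y,z],x] = -[x,[y,z]]` and `[[z,x],y] = [y,z]` cancel under `f`, and the
identity collapses to `1 = ω(x,y)`, contradicting `ω(x, ·) = 0`.
-/

section

variable {k L : Type*} [CommRing k] [AddCommGroup L] [Module k L]

theorem apply_eq_of_omega_jacobi_of_comp_ad_eq
    (bracket : L →ₗ[k] L →ₗ[k] L) (ω : L →ₗ[k] L →ₗ[k] k)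
    (hanti : ∀ a b : L, bracket a b = - bracket b a)
    (hjac : ∀ a b c : L,
      bracket (bracket a b) c + bracket (bracket b c) a + bracket (bracket c a) b
        = ω a b • c + ω b c • a + ω c a • b)
    {x y z : L} (hxy : bracket x y = x) (hxz : bracket x z = z)
    (f : L →ₗ[k] k) (hf : f ∘ₗ bracket x = f) :
    f z = ω x y * f z + ω y z * f x + ω z x * f y := by
  have hfx (w : L) : f (bracket x w) = f w := LinearMap.congr_fun hf w
  have h := congrArg f (hjac x y z)
  rw [hxy, hanti (bracket y z) x, hanti z x, hxz, map_neg, LinearMap.neg_apply,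
    ← hanti y z] at h
  simpa [hfx] using h

theorem Module.Basis.coord_two_comp_eq_of_bracket_eq
    (bracket : L →ₗ[k] L →ₗ[k] L) (b : Module.Basis (Fin 3) k L)
    (h0 : bracket (b 0) (b 0) = 0) (h1 : bracket (b 0) (b 1) = b 0)
    (h2 : bracket (b 0) (b 2) = b 2) :
    b.coord 2 ∘ₗ bracket (b 0) = b.coord 2 := by
  refine b.ext fun i => ?_
  fin_cases i <;> simp [h0, h1, h2]

end

theorem no_omega_lie_case_D_general
    {L : Type*} [AddCommGroup L] [Module ℂ L]
    (bracket : L →ₗ[ℂ] L →ₗ[ℂ] L) (ω : L →ₗ[ℂ] L →ₗ[ℂ] ℂ)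
    (hanti : ∀ a b : L, bracket a b = - bracket b a)
    (hjac : ∀ a b c : L,
      bracket (bracket a b) c + bracket (bracket b c) a + bracket (bracket c a) b
        = ω a b • c + ω b c • a + ω c a • b)
    (b : Module.Basis (Fin 3) ℂ L) :
    ¬ ((∀ v : L, ω (b 0) v = 0) ∧
        bracket (b 0) (b 1) = b 0 ∧
        bracket (b 0) (b 2) = b 2) := by
  rintro ⟨hω, h1, h2⟩
  have : IsAddTorsionFree L := .of_isTorsionFree ℂ L
  have h0 : bracket (b 0) (b 0) = 0 := self_eq_neg.mp (hanti _ _)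
  have key := apply_eq_of_omega_jacobi_of_comp_ad_eq bracket ω hanti hjac h1 h2 (b.coord 2)
    (b.coord_two_comp_eq_of_bracket_eq bracket h0 h1 h2)
  simp [hω] at key

/-- There is no 3-dimensional complex ω-Lie algebra `L` with a basis `{x, y, z}` such that
`ω(x,v) = 0` for all `v ∈ L`, `[x,y] = x` and `[x,z] = z`. -/
theorem no_omega_lie_case_D
    {L : Type*} [AddCommGroup L] [Module ℂ L]
    (bracket : L →ₗ[ℂ] L →ₗ[ℂ] L) (ω : L →ₗ[ℂ] L →ₗ[ℂ] ℂ)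
    (hanti : ∀ a b : L, bracket a b = - bracket b a)
    (hskew : ∀ a b : L, ω a b = - ω b a)
    (hjac : ∀ a b c : L,
      bracket (bracket a b) c + bracket (bracket b c) a + bracket (bracket c a) b
        = ω a b • c + ω b c • a + ω c a • b)
    (b : Module.Basis (Fin 3) ℂ L) :
    ¬ ((∀ v : L, ω (b 0) v = 0) ∧
        bracket (b 0) (b 1) = b 0 ∧
        bracket (b 0) (b 2) = b 2) :=
  no_omega_lie_case_D_general bracket ω hanti hjac b
end
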